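/- arXiv:2204.01394 — 4 statements merged into one kernel-verified Lean document; each statement's English description precedes it below -/
import Mathlib

section
/- Fix s ∈ (0,1). There exist constants c, C > 0 (depending only on s) such that for every real k ≥ 4, c·k^s ≤ ∫₀^{1/2} u^{-1-2s}·(1 - (1-u²)^{k/2}) du ≤ C·k^s. -/
/-!
Put `r = k^(-1/2)`. Bernoulli's inequality bounds the integrand by `(k/2) u^(1-2s)` on `[0, r]`, and
trivially by `u^(-1-2s)` on `[r, 1/2]`; integrating, both pieces are `O(r^(-2s)) = O(k^s)`.
Conversely `(1-u²)^(k/2) ≤ exp(-k u²/2) ≤ exp(-1/8)` on `[r/2, r]`, so the integral is at least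
`(1 - e^(-1/8)) ∫_{r/2}^r u^(-1-2s) du`, a fixed multiple of `k^s`.
-/

open MeasureTheory Real Set intervalIntegral

noncomputable def angularKernel (s k u : ℝ) : ℝ :=
  u ^ (-1 - 2 * s) * (1 - (1 - u ^ 2) ^ (k / 2))

lemma one_sub_one_sub_rpow_le_mul {x p : ℝ} (hx : x ≤ 1) (hp : 1 ≤ p) :
    1 - (1 - x) ^ p ≤ p * x := by
  have := one_add_mul_self_le_rpow_one_add (s := -x) (by linarith) hp
  rw [← sub_eq_add_neg] at this
  linarith

lemma one_sub_rpow_le_exp_neg_mul {x p : ℝ} (hx : x ≤ 1) (hp : 0 ≤ p) :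
    (1 - x) ^ p ≤ exp (-(p * x)) := calc
  (1 - x) ^ p ≤ exp (-x) ^ p := rpow_le_rpow (by linarith) (one_sub_le_exp_neg x) hp
  _ = exp (-(p * x)) := by rw [← exp_mul]; ring_nf

section angularKernel

variable {s k u : ℝ}

lemma angularKernel_nonneg (hu0 : 0 ≤ u) (hu1 : u ≤ 1) (hk : 0 ≤ k) :
    0 ≤ angularKernel s k u := by
  have : (1 - u ^ 2) ^ (k / 2) ≤ 1 := rpow_le_one (by nlinarith) (by nlinarith) (by linarith)
  exact mul_nonneg (rpow_nonneg hu0 _) (by linarith)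

lemma angularKernel_le_rpow (hu0 : 0 ≤ u) (hu1 : u ≤ 1) :
    angularKernel s k u ≤ u ^ (-1 - 2 * s) := by
  have : 0 ≤ (1 - u ^ 2) ^ (k / 2) := rpow_nonneg (by nlinarith) _
  exact mul_le_of_le_one_right (rpow_nonneg hu0 _) (by linarith)

lemma angularKernel_le_mul_rpow (hu0 : 0 ≤ u) (hu1 : u ≤ 1) (hk : 2 ≤ k) :
    angularKernel s k u ≤ k / 2 * u ^ (1 - 2 * s) := by
  rcases hu0.eq_or_lt with rfl | hu0
  · have : angularKernel s k 0 = 0 := by simp [angularKernel]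
    rw [this]; positivity
  calc angularKernel s k u ≤ u ^ (-1 - 2 * s) * (k / 2 * u ^ 2) :=
        mul_le_mul_of_nonneg_left (one_sub_one_sub_rpow_le_mul (by nlinarith) (by linarith))
          (rpow_nonneg hu0.le _)
    _ = k / 2 * u ^ (1 - 2 * s) := by
        rw [mul_left_comm, show 1 - 2 * s = -1 - 2 * s + 2 by ring, rpow_add hu0, rpow_two]

lemma one_sub_exp_mul_rpow_le_angularKernel (hu0 : 0 ≤ u) (hu1 : u ≤ 1) (hk : 0 ≤ k) :
    (1 - exp (-(k / 2 * u ^ 2))) * u ^ (-1 - 2 * s) ≤ angularKernel s k u := by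
  rw [angularKernel, mul_comm]
  have := one_sub_rpow_le_exp_neg_mul (x := u ^ 2) (p := k / 2) (by nlinarith) (by linarith)
  exact mul_le_mul_of_nonneg_left (by linarith) (rpow_nonneg hu0 _)

lemma measurable_angularKernel : Measurable (angularKernel s k) := by
  unfold angularKernel; fun_prop

lemma intervalIntegrable_angularKernel (hs : s < 1) (hk : 2 ≤ k) {a b : ℝ}
    (ha : a ∈ Icc (0 : ℝ) 1) (hb : b ∈ Icc (0 : ℝ) 1) :
    IntervalIntegrable (angularKernel s k) volume a b := by
  have hbound : IntervalIntegrable (fun u ↦ k / 2 * u ^ (1 - 2 * s)) volume 0 1 :=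
    (intervalIntegrable_rpow' (by linarith)).const_mul _
  refine (hbound.mono_fun' measurable_angularKernel.aestronglyMeasurable ?_).mono_set
    (uIcc_subset_uIcc (Icc_subset_uIcc ha) (Icc_subset_uIcc hb))
  rw [uIoc_of_le zero_le_one]
  filter_upwards [ae_restrict_mem measurableSet_Ioc] with u hu
  rw [norm_of_nonneg (angularKernel_nonneg hu.1.le hu.2 (by linarith))]
  exact angularKernel_le_mul_rpow hu.1.le hu.2 hk

lemma integral_angularKernel_le (hs0 : 0 < s) (hs1 : s < 1) (hk : 2 ≤ k) {r b : ℝ}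
    (hr : 0 < r) (hrb : r ≤ b) (hb : b ≤ 1) :
    ∫ u in 0..b, angularKernel s k u ≤
      k / 2 * (r ^ (2 - 2 * s) / (2 - 2 * s)) + r ^ (-2 * s) / (2 * s) := by
  have hr1 : r ≤ 1 := hrb.trans hb
  have h0 : (0 : ℝ) ∉ uIcc r b := notMem_uIcc_of_lt hr (hr.trans_le hrb)
  rw [← integral_add_adjacent_intervals (b := r)
    (intervalIntegrable_angularKernel hs1 hk ⟨le_rfl, zero_le_one⟩ ⟨hr.le, hr1⟩)
    (intervalIntegrable_angularKernel hs1 hk ⟨hr.le, hr1⟩ ⟨hr.le.trans hrb, hb⟩)]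
  gcongr ?_ + ?_
  · calc ∫ u in 0..r, angularKernel s k u ≤ ∫ u in 0..r, k / 2 * u ^ (1 - 2 * s) :=
          integral_mono_on hr.le
            (intervalIntegrable_angularKernel hs1 hk ⟨le_rfl, zero_le_one⟩ ⟨hr.le, hr1⟩)
            ((intervalIntegrable_rpow' (by linarith)).const_mul _)
            fun u hu ↦ angularKernel_le_mul_rpow hu.1 (hu.2.trans hr1) hk
      _ = k / 2 * (r ^ (2 - 2 * s) / (2 - 2 * s)) := by
          rw [intervalIntegral.integral_const_mul, integral_rpow (Or.inl (by linarith)),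
            zero_rpow (by linarith), show 1 - 2 * s + 1 = 2 - 2 * s by ring, sub_zero]
  · calc ∫ u in r..b, angularKernel s k u ≤ ∫ u in r..b, u ^ (-1 - 2 * s) :=
          integral_mono_on hrb
            (intervalIntegrable_angularKernel hs1 hk ⟨hr.le, hr1⟩ ⟨hr.le.trans hrb, hb⟩)
            (intervalIntegrable_rpow (Or.inr h0))
            fun u hu ↦ angularKernel_le_rpow (hr.le.trans hu.1) (hu.2.trans hb)
      _ = (r ^ (-2 * s) - b ^ (-2 * s)) / (2 * s) := by
          rw [integral_rpow (Or.inr ⟨by linarith, h0⟩), show -1 - 2 * s + 1 = -2 * s by ring]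
          field_simp
          ring
      _ ≤ r ^ (-2 * s) / (2 * s) := by
          gcongr
          linarith [rpow_nonneg (hr.le.trans hrb) (-2 * s)]

lemma le_integral_angularKernel (hs0 : 0 < s) (hs1 : s < 1) (hk : 2 ≤ k) {r b : ℝ}
    (hr : 0 < r) (hrb : r ≤ b) (hb : b ≤ 1) (hkr : 1 ≤ k * r ^ 2) :
    (1 - exp (-(1 / 8))) * (((r / 2) ^ (-2 * s) - r ^ (-2 * s)) / (2 * s)) ≤
      ∫ u in 0..b, angularKernel s k u := by
  have hr2 : 0 < r / 2 := half_pos hr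
  have h0 : (0 : ℝ) ∉ uIcc (r / 2) r := notMem_uIcc_of_lt hr2 hr
  have hr1 : r ≤ 1 := hrb.trans hb
  calc (1 - exp (-(1 / 8))) * (((r / 2) ^ (-2 * s) - r ^ (-2 * s)) / (2 * s))
      = ∫ u in r / 2..r, (1 - exp (-(1 / 8))) * u ^ (-1 - 2 * s) := by
        rw [intervalIntegral.integral_const_mul, integral_rpow (Or.inr ⟨by linarith, h0⟩),
          show -1 - 2 * s + 1 = -2 * s by ring]
        congr 1
        field_simp
        ring
    _ ≤ ∫ u in r / 2..r, angularKernel s k u := by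
        refine integral_mono_on (by linarith) ((intervalIntegrable_rpow (Or.inr h0)).const_mul _)
          (intervalIntegrable_angularKernel hs1 hk ⟨hr2.le, by linarith⟩ ⟨hr.le, hr1⟩)
          fun u hu ↦ le_trans ?_
            (one_sub_exp_mul_rpow_le_angularKernel (hr2.le.trans hu.1) (hu.2.trans hr1)
              (by linarith))
        have : (r / 2) ^ 2 ≤ u ^ 2 := pow_le_pow_left₀ hr2.le hu.1 2
        gcongr
        · exact rpow_nonneg (hr2.le.trans hu.1) _
        · nlinarith
    _ ≤ ∫ u in 0..b, angularKernel s k u :=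
        integral_mono_interval hr2.le (by linarith) hrb
          (by
            filter_upwards [ae_restrict_mem measurableSet_Ioc] with u hu
            exact angularKernel_nonneg hu.1.le (hu.2.trans hb) (by linarith))
          (intervalIntegrable_angularKernel hs1 hk ⟨le_rfl, zero_le_one⟩ ⟨hr.le.trans hrb, hb⟩)

end angularKernel

theorem stmt3 (s : ℝ) (hs0 : 0 < s) (hs1 : s < 1) :
    ∃ c C : ℝ, 0 < c ∧ 0 < C ∧ ∀ k : ℝ, 4 ≤ k →
      c * k ^ s ≤ (∫ u in (0:ℝ)..(1/2), u ^ (-1 - 2 * s) * (1 - (1 - u ^ 2) ^ (k / 2))) ∧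
      (∫ u in (0:ℝ)..(1/2), u ^ (-1 - 2 * s) * (1 - (1 - u ^ 2) ^ (k / 2))) ≤ C * k ^ s := by
  have hexp : exp (-(1 / 8)) < 1 := exp_lt_one_iff.mpr (by norm_num)
  have hhalf : 1 < (1 / 2 : ℝ) ^ (-2 * s) :=
    one_lt_rpow_of_pos_of_lt_one_of_neg (by norm_num) (by norm_num) (by linarith)
  refine ⟨(1 - exp (-(1 / 8))) * (((1 / 2) ^ (-2 * s) - 1) / (2 * s)),
    1 / (4 * (1 - s)) + 1 / (2 * s), mul_pos (by linarith) (div_pos (by linarith) (by linarith)),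
    add_pos (div_pos one_pos (by linarith)) (div_pos one_pos (by linarith)), fun k hk ↦ ?_⟩
  have hk0 : 0 < k := by linarith
  set r := k ^ (-1 / 2 : ℝ)
  have hr : 0 < r := rpow_pos_of_pos hk0 _
  have hr_sq : r ^ 2 = k⁻¹ := by
    rw [← rpow_two, ← rpow_mul hk0.le, show -1 / 2 * 2 = (-1 : ℝ) by norm_num, rpow_neg_one]
  have hr_rpow : r ^ (-2 * s) = k ^ s := by rw [← rpow_mul hk0.le]; ring_nf
  have hr_half : r ≤ 1 / 2 := by nlinarith [inv_anti₀ (by norm_num : (0 : ℝ) < 4) hk]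
  constructor
  · calc _ = (1 - exp (-(1 / 8))) * (((r / 2) ^ (-2 * s) - r ^ (-2 * s)) / (2 * s)) := by
          rw [div_eq_mul_one_div r, mul_rpow hr.le (by norm_num), hr_rpow]; ring
      _ ≤ _ := le_integral_angularKernel hs0 hs1 (by linarith) hr hr_half (by norm_num)
          (by rw [hr_sq, mul_inv_cancel₀ hk0.ne'])
  · calc _ ≤ k / 2 * (r ^ (2 - 2 * s) / (2 - 2 * s)) + r ^ (-2 * s) / (2 * s) :=
          integral_angularKernel_le hs0 hs1 (by linarith) hr hr_half (by norm_num)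
      _ = _ := by
          rw [show 2 - 2 * s = 2 + -2 * s by ring, rpow_add hr, rpow_two, hr_sq, hr_rpow]
          field_simp
          ring
end

section
/- Let γ ∈ (-3, 0]. There exists a constant c > 0 such that for every measurable F : ℝ³ → ℝ with F ≥ 0, ∫_{ℝ³} F(v_*) dv_* ≥ 1/2, and ∫_{ℝ³} F(v_*)·(1+|v_*|²) dv_* ≤ 4, one has for all v ∈ ℝ³: ∫_{ℝ³} |v - v_*|^γ F(v_*) dv_* ≥ c·⟨v⟩^γ. -/
/-!
View `F w dw` as a measure `ν`. By Chebyshev, the second-moment bound leaves mass at most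
`4 / 4² = 1/4` outside the ball `‖w‖ ≤ 4`, so `ν` gives that ball mass at least `1/4`.
On the ball `‖v - w‖ ≤ ‖v‖ + 4 ≤ 5 ⟨v⟩`, hence `‖v - w‖ ^ γ ≥ 5 ^ γ ⟨v⟩ ^ γ` as `γ ≤ 0`
(away from the null set `w = v`); integrating over the ball gives `c = 5 ^ γ / 4`.
-/

open MeasureTheory

noncomputable def jb (v : EuclideanSpace ℝ (Fin 3)) : ℝ := Real.sqrt (1 + ‖v‖ ^ 2)

open Metric
open scoped ENNReal

lemma jb_pos (v : EuclideanSpace ℝ (Fin 3)) : 0 < jb v :=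
  Real.sqrt_pos.mpr (by positivity)

lemma one_le_jb (v : EuclideanSpace ℝ (Fin 3)) : 1 ≤ jb v :=
  Real.one_le_sqrt.mpr (by nlinarith [sq_nonneg ‖v‖])

lemma norm_le_jb (v : EuclideanSpace ℝ (Fin 3)) : ‖v‖ ≤ jb v :=
  Real.le_sqrt_of_sq_le (by linarith)

lemma norm_sub_le_mul_jb {v w : EuclideanSpace ℝ (Fin 3)} {R : ℝ} (hR : 0 ≤ R)
    (hw : ‖w‖ ≤ R) : ‖v - w‖ ≤ (1 + R) * jb v :=
  calc ‖v - w‖ ≤ ‖v‖ + ‖w‖ := norm_sub_le v w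
    _ ≤ jb v + R * jb v :=
      add_le_add (norm_le_jb v) (hw.trans (le_mul_of_one_le_right hR (one_le_jb v)))
    _ = (1 + R) * jb v := by ring

section SecondMoment

variable {E : Type*} [NormedAddCommGroup E] [MeasurableSpace E] [OpensMeasurableSpace E]

lemma measure_sub_moment_div_le_measure_closedBall (ν : Measure E) {R : ℝ} (hR : 0 < R) :
    ν Set.univ - (∫⁻ w, ENNReal.ofReal (‖w‖ ^ 2) ∂ν) / ENNReal.ofReal (R ^ 2)
      ≤ ν (closedBall 0 R) := by
  have htail : ν (closedBall 0 R)ᶜ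
      ≤ (∫⁻ w, ENNReal.ofReal (‖w‖ ^ 2) ∂ν) / ENNReal.ofReal (R ^ 2) := by
    have hsub : (closedBall (0 : E) R)ᶜ
        ⊆ {w | ENNReal.ofReal (R ^ 2) ≤ ENNReal.ofReal (‖w‖ ^ 2)} :=
      fun w hw => ENNReal.ofReal_le_ofReal <|
        pow_le_pow_left₀ hR.le (le_of_not_ge (mt mem_closedBall_zero_iff.mpr hw)) 2
    rw [ENNReal.le_div_iff_mul_le (by simp [hR.ne']) (by simp), mul_comm]
    exact (mul_le_mul_right (measure_mono hsub) _).trans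
      (mul_meas_ge_le_lintegral₀ (by fun_prop) _)
  rw [tsub_le_iff_right]
  exact (measure_univ_le_add_compl _).trans (by gcongr)

lemma quarter_le_measure_closedBall (ν : Measure E) (hmass : 1 / 2 ≤ ν Set.univ)
    (hmom : ∫⁻ w, ENNReal.ofReal (‖w‖ ^ 2) ∂ν ≤ 4) : 1 / 4 ≤ ν (closedBall 0 4) :=
  calc (1 / 4 : ℝ≥0∞) = 1 / 2 - 4 / ENNReal.ofReal (4 ^ 2) := by
        have hquarter : (4 / 16 : ℝ≥0∞) = 1 / 4 := by
          rw [ENNReal.div_eq_div_iff (by simp) (by simp) (by simp) (by simp)]; norm_num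
        rw [show ENNReal.ofReal (4 ^ 2) = 16 by norm_num, hquarter, eq_comm]
        refine ENNReal.sub_eq_of_eq_add (by simp) ?_
        rw [ENNReal.div_add_div_same,
          ENNReal.div_eq_div_iff (by simp) (by simp) (by simp) (by simp)]
        norm_num
    _ ≤ ν Set.univ - (∫⁻ w, ENNReal.ofReal (‖w‖ ^ 2) ∂ν) / ENNReal.ofReal (4 ^ 2) := by gcongr
    _ ≤ ν (closedBall 0 4) := measure_sub_moment_div_le_measure_closedBall ν (by norm_num)

end SecondMoment

lemma lintegral_withDensity_ofReal {α : Type*} [MeasurableSpace α] (μ : Measure α)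
    {F g : α → ℝ} (hF : Measurable F) (hF0 : ∀ x, 0 ≤ F x) (hg : Measurable g) :
    ∫⁻ x, ENNReal.ofReal (g x) ∂μ.withDensity (fun x => ENNReal.ofReal (F x))
      = ∫⁻ x, ENNReal.ofReal (F x * g x) ∂μ := by
  rw [lintegral_withDensity_eq_lintegral_mul _ hF.ennreal_ofReal hg.ennreal_ofReal]
  simp only [Pi.mul_apply, ← ENNReal.ofReal_mul (hF0 _)]

lemma mul_measure_closedBall_le_lintegral_rpow_norm_sub
    (ν : Measure (EuclideanSpace ℝ (Fin 3))) (hν : ν ≪ volume) {γ : ℝ} (hγ : γ ≤ 0) {R : ℝ}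
    (hR : 0 ≤ R) (v : EuclideanSpace ℝ (Fin 3)) :
    ENNReal.ofReal (((1 + R) * jb v) ^ γ) * ν (closedBall 0 R)
      ≤ ∫⁻ w, ENNReal.ofReal (‖v - w‖ ^ γ) ∂ν := by
  have hne : ∀ᵐ w ∂ν, w ∉ ({v} : Set _) :=
    measure_eq_zero_iff_ae_notMem.mp (hν (measure_singleton v))
  rw [← setLIntegral_const]
  refine le_trans (setLIntegral_mono_ae' measurableSet_closedBall ?_)
    (setLIntegral_le_lintegral _ _)
  filter_upwards [hne] with w hwv hw
  have hvw : 0 < ‖v - w‖ := norm_pos_iff.mpr (sub_ne_zero.mpr (Ne.symm hwv))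
  exact ENNReal.ofReal_le_ofReal <| Real.rpow_le_rpow_of_nonpos hvw
    (norm_sub_le_mul_jb hR (mem_closedBall_zero_iff.mp hw)) hγ

theorem stmt12_general (γ : ℝ) (hγ2 : γ ≤ 0) :
    ∃ c : ℝ, 0 < c ∧ ∀ F : EuclideanSpace ℝ (Fin 3) → ℝ, Measurable F → (∀ v, 0 ≤ F v) →
      (1/2 : ENNReal) ≤ (∫⁻ v, ENNReal.ofReal (F v)) →
      (∫⁻ v, ENNReal.ofReal (F v * (1 + ‖v‖ ^ 2))) ≤ 4 →
      ∀ v : EuclideanSpace ℝ (Fin 3),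
        ENNReal.ofReal (c * jb v ^ γ) ≤ ∫⁻ w, ENNReal.ofReal (‖v - w‖ ^ γ * F w) := by
  refine ⟨5 ^ γ / 4, by positivity, fun F hF hF0 hmass hmom v => ?_⟩
  set ν := volume.withDensity fun w => ENNReal.ofReal (F w)
  have hνmass : 1 / 2 ≤ ν Set.univ := by
    rwa [withDensity_apply _ MeasurableSet.univ, Measure.restrict_univ]
  have hνmom : ∫⁻ w, ENNReal.ofReal (‖w‖ ^ 2) ∂ν ≤ 4 := by
    rw [lintegral_withDensity_ofReal _ hF hF0 (by fun_prop)]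
    refine le_trans (lintegral_mono fun w => ENNReal.ofReal_le_ofReal ?_) hmom
    exact mul_le_mul_of_nonneg_left (by linarith) (hF0 w)
  calc ENNReal.ofReal (5 ^ γ / 4 * jb v ^ γ)
      = ENNReal.ofReal (((1 + 4) * jb v) ^ γ) * (1 / 4) := by
        rw [show (1 / 4 : ℝ≥0∞) = ENNReal.ofReal (1 / 4) by
            rw [ENNReal.ofReal_div_of_pos] <;> simp,
          ← ENNReal.ofReal_mul (Real.rpow_nonneg (by nlinarith [jb_pos v]) _),
          Real.mul_rpow (by norm_num) (jb_pos v).le]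
        ring_nf
    _ ≤ ENNReal.ofReal (((1 + 4) * jb v) ^ γ) * ν (closedBall 0 4) := by
        gcongr
        exact quarter_le_measure_closedBall ν hνmass hνmom
    _ ≤ ∫⁻ w, ENNReal.ofReal (‖v - w‖ ^ γ) ∂ν :=
        mul_measure_closedBall_le_lintegral_rpow_norm_sub ν
          (withDensity_absolutelyContinuous _ _) hγ2 (by norm_num) v
    _ = ∫⁻ w, ENNReal.ofReal (‖v - w‖ ^ γ * F w) := by
        rw [lintegral_withDensity_ofReal _ hF hF0 (by fun_prop)]
        simp only [mul_comm]

theorem stmt12 (γ : ℝ) (hγ1 : -3 < γ) (hγ2 : γ ≤ 0) :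
    ∃ c : ℝ, 0 < c ∧ ∀ F : EuclideanSpace ℝ (Fin 3) → ℝ, Measurable F → (∀ v, 0 ≤ F v) →
      (1/2 : ENNReal) ≤ (∫⁻ v, ENNReal.ofReal (F v)) →
      (∫⁻ v, ENNReal.ofReal (F v * (1 + ‖v‖ ^ 2))) ≤ 4 →
      ∀ v : EuclideanSpace ℝ (Fin 3),
        ENNReal.ofReal (c * jb v ^ γ) ≤ ∫⁻ w, ENNReal.ofReal (‖v - w‖ ^ γ * F w) :=
  stmt12_general γ hγ2
end

section
/- Let a < 0 < β and α > 0 be real numbers. Then there exist constants c, C > 0 such that for all t ≥ 0, sup_{v ∈ ℝ³} exp(-⟨v⟩^{a}·t - α·⟨v⟩^{β}) ≤ C·exp(-c·t^{β/(β - a)}). -/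
theorem stmt17 (a β α : ℝ) (ha : a < 0) (hβ : 0 < β) (hα : 0 < α) :
    ∃ c C : ℝ, 0 < c ∧ 0 < C ∧ ∀ t : ℝ, 0 ≤ t → ∀ v : EuclideanSpace ℝ (Fin 3),
      Real.exp (-(jb v ^ a) * t - α * jb v ^ β) ≤ C * Real.exp (-c * t ^ (β / (β - a))) := by
  have hba : 0 < β - a := by linarith
  refine ⟨min 1 α, 1, lt_min one_pos hα, one_pos, ?_⟩
  intro t ht v
  have hx1 : 1 ≤ jb v := by
    rw [jb]
    nlinarith [Real.sq_sqrt (by positivity : (0:ℝ) ≤ 1 + ‖v‖ ^ 2),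
      Real.sqrt_nonneg (1 + ‖v‖ ^ 2), sq_nonneg ‖v‖, sq_nonneg (Real.sqrt (1 + ‖v‖ ^ 2) - 1)]
  set x := jb v with hxdef
  have hx0 : (0:ℝ) < x := lt_of_lt_of_le one_pos hx1
  have htρ : 0 ≤ t ^ (β/(β-a)) := Real.rpow_nonneg ht _
  have hxa : 0 < x ^ a := Real.rpow_pos_of_pos hx0 _
  have hxβ : 0 < x ^ β := Real.rpow_pos_of_pos hx0 _
  have key : min 1 α * t ^ (β/(β-a)) ≤ x ^ a * t + α * x ^ β := by
    rcases le_total t (x ^ (β - a)) with hcase | hcase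
    · have h1 : t ^ ((β-a)⁻¹) ≤ x := by
        calc t ^ ((β-a)⁻¹) ≤ (x ^ (β-a)) ^ ((β-a)⁻¹) :=
              Real.rpow_le_rpow ht hcase (by positivity)
          _ = x := Real.rpow_rpow_inv hx0.le hba.ne'
      have h2 : t ^ (β/(β-a)) ≤ x ^ β := by
        calc t ^ (β/(β-a)) = (t ^ ((β-a)⁻¹)) ^ β := by
              rw [← Real.rpow_mul ht]; ring_nf
          _ ≤ x ^ β := Real.rpow_le_rpow (Real.rpow_nonneg ht _) h1 hβ.le
      have h3 : min 1 α * t ^ (β/(β-a)) ≤ α * x ^ β :=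
        mul_le_mul (min_le_right _ _) h2 htρ hα.le
      nlinarith [mul_nonneg hxa.le ht]
    · have hxb : (1:ℝ) ≤ x ^ (β - a) := by
        calc (1:ℝ) = 1 ^ (β - a) := (Real.one_rpow _).symm
          _ ≤ x ^ (β - a) := Real.rpow_le_rpow zero_le_one hx1 hba.le
      have htpos : (0:ℝ) < t := lt_of_lt_of_le one_pos (le_trans hxb hcase)
      have hexp : a / (β - a) ≤ 0 := div_nonpos_of_nonpos_of_nonneg ha.le hba.le
      have h1 : t ^ (a/(β-a)) ≤ x ^ a := by
        calc t ^ (a/(β-a)) ≤ (x ^ (β-a)) ^ (a/(β-a)) :=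
              Real.rpow_le_rpow_of_nonpos (Real.rpow_pos_of_pos hx0 _) hcase hexp
          _ = x ^ a := by
              rw [← Real.rpow_mul hx0.le]; congr 1; field_simp
      have h2 : t ^ (β/(β-a)) = t * t ^ (a/(β-a)) := by
        rw [show β/(β-a) = 1 + a/(β-a) by field_simp; ring,
          Real.rpow_add htpos, Real.rpow_one]
      have h3 : t ^ (β/(β-a)) ≤ x ^ a * t := by
        rw [h2, mul_comm]
        exact mul_le_mul_of_nonneg_right h1 htpos.le
      have h4 : min 1 α * t ^ (β/(β-a)) ≤ t ^ (β/(β-a)) := by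
        nlinarith [min_le_left (1:ℝ) α]
      nlinarith [mul_pos hα hxβ]
  calc Real.exp (-(x ^ a) * t - α * x ^ β) ≤ Real.exp (-(min 1 α * t ^ (β/(β-a)))) := by
        rw [Real.exp_le_exp]; linarith
    _ = 1 * Real.exp (-(min 1 α) * t ^ (β/(β-a))) := by rw [one_mul, neg_mul]
end

section
/- Let γ < 0, m > 0 and ε ∈ (0, 2m). There exists C > 0 such that for all t ≥ 0, inf_{R ≥ 1} (exp(-R^{γ}·t) + R^{-2m}) ≤ C·(1+t)^{-(2m-ε)/|γ|}. -/
theorem stmt18 (γ m ε : ℝ) (hγ : γ < 0) (hm : 0 < m) (hε0 : 0 < ε) (hε1 : ε < 2 * m) :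
    ∃ C : ℝ, 0 < C ∧ ∀ t : ℝ, 0 ≤ t → ∃ R : ℝ, 1 ≤ R ∧
      Real.exp (-(R ^ γ) * t) + R ^ (-(2 * m)) ≤ C * (1 + t) ^ (-(2 * m - ε) / |γ|) := by
  have hg : 0 < |γ| := abs_pos.mpr (ne_of_lt hγ)
  set g := |γ| with hgdef
  have hγg : γ = -g := by rw [hgdef, abs_of_neg hγ]; ring
  set p := (2 * m - ε) / g with hp
  have hp0 : 0 < p := div_pos (by linarith) hg
  set θ := ε / (2 * m) with hθ
  have hθ0 : 0 < θ := div_pos hε0 (by linarith)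
  set a := (2 * m - ε) / (2 * m * g) with ha
  have ha0 : 0 < a := div_pos (by linarith) (by positivity)
  set n := ⌈p / θ⌉₊ with hn
  have hnθ : p ≤ n * θ := by
    rw [← div_le_iff₀ hθ0]
    exact Nat.le_ceil _
  set K := max ((2:ℝ) ^ p) ((Nat.factorial n : ℝ) * 2 ^ n) with hK
  have hK0 : 0 < K := lt_of_lt_of_le (Real.rpow_pos_of_pos two_pos p) (le_max_left _ _)
  refine ⟨K + 1, by positivity, fun t ht => ?_⟩
  have hs1 : (1:ℝ) ≤ 1 + t := by linarith
  have hs0 : (0:ℝ) < 1 + t := by linarith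
  refine ⟨(1 + t) ^ a, Real.one_le_rpow hs1 ha0.le, ?_⟩
  have hexp : -(2 * m - ε) / g = -p := by rw [hp]; ring
  rw [hexp]
  -- second term equals (1+t)^(-p)
  have h2 : ((1 + t) ^ a) ^ (-(2 * m)) = (1 + t) ^ (-p) := by
    rw [← Real.rpow_mul hs0.le]
    congr 1
    rw [ha, hp]
    field_simp
  rw [h2]
  have hRγ : ((1 + t) ^ a) ^ γ = (1 + t) ^ (θ - 1) := by
    rw [← Real.rpow_mul hs0.le]
    congr 1
    rw [hγg, ha, hθ]
    field_simp
    ring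
  rw [hRγ]
  have h1 : Real.exp (-(1 + t) ^ (θ - 1) * t) ≤ K * (1 + t) ^ (-p) := by
    rcases le_or_gt t 1 with hc | hc
    · -- small time
      have he1 : Real.exp (-(1 + t) ^ (θ - 1) * t) ≤ 1 := by
        rw [Real.exp_le_one_iff]
        have := Real.rpow_pos_of_pos hs0 (θ - 1)
        nlinarith
      refine he1.trans ?_
      have hb : (2:ℝ) ^ (-p) ≤ (1 + t) ^ (-p) :=
        Real.rpow_le_rpow_of_nonpos hs0 (by linarith) (by linarith)
      calc (1:ℝ) = 2 ^ p * 2 ^ (-p) := by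
            rw [← Real.rpow_add two_pos]; simp
        _ ≤ K * (1 + t) ^ (-p) := by
            apply mul_le_mul (le_max_left _ _) hb
              (Real.rpow_nonneg (by norm_num) _) hK0.le
    · -- large time
      set y := (1 + t) ^ θ / 2 with hy
      have hyp : 0 < y := by
        have := Real.rpow_pos_of_pos hs0 θ
        positivity
      have hxy : y ≤ (1 + t) ^ (θ - 1) * t := by
        rw [Real.rpow_sub hs0, Real.rpow_one, hy]
        rw [div_mul_eq_mul_div, div_le_div_iff₀ (by norm_num) hs0]
        have h0 : 0 < (1 + t) ^ θ := Real.rpow_pos_of_pos hs0 θ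
        nlinarith
      have he2 : Real.exp (-(1 + t) ^ (θ - 1) * t) ≤ Real.exp (-y) := by
        apply Real.exp_le_exp.mpr; linarith
      have he3 : Real.exp (-y) ≤ (Nat.factorial n : ℝ) / y ^ n := by
        rw [Real.exp_neg]
        rw [inv_le_iff_one_le_mul₀ (Real.exp_pos y), div_mul_eq_mul_div,
          le_div_iff₀ (by positivity)]
        have := Real.pow_div_factorial_le_exp y hyp.le n
        rw [div_le_iff₀ (by positivity : (0:ℝ) < (Nat.factorial n : ℝ))] at this
        nlinarith [Real.exp_pos y, this]
      have hyn : y ^ n = (1 + t) ^ (θ * n) / 2 ^ n := by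
        rw [hy, div_pow, ← Real.rpow_natCast ((1 + t) ^ θ) n,
          ← Real.rpow_mul hs0.le]
      have he4 : (Nat.factorial n : ℝ) / y ^ n
          = (Nat.factorial n : ℝ) * 2 ^ n * (1 + t) ^ (-(θ * n)) := by
        rw [hyn, Real.rpow_neg hs0.le]
        field_simp
      have he5 : (1 + t) ^ (-(θ * n)) ≤ (1 + t) ^ (-p) :=
        Real.rpow_le_rpow_of_exponent_le hs1 (by linarith)
      calc Real.exp (-(1 + t) ^ (θ - 1) * t)
          ≤ (Nat.factorial n : ℝ) / y ^ n := he2.trans he3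
        _ = (Nat.factorial n : ℝ) * 2 ^ n * (1 + t) ^ (-(θ * n)) := he4
        _ ≤ K * (1 + t) ^ (-p) := by
            apply mul_le_mul (le_max_right _ _) he5
              (Real.rpow_nonneg hs0.le _) hK0.le
  have hpos : 0 < (1 + t) ^ (-p) := Real.rpow_pos_of_pos hs0 _
  nlinarith [h1]
end
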